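/- Consider an OCO with unbounded memory instance (𝒳, ℋ, A, B) with H_1 = Σ_{k=0}^∞ k‖A^k‖ < ∞. Let f_1, …, f_T : ℋ → ℝ be L-Lipschitz continuous, suppose each f̄_t is convex and L̄-Lipschitz continuous, let R : 𝒳 → ℝ be α-strongly convex with |R(x) − R(x̃)| ≤ D for all x, x̃ ∈ 𝒳, let η > 0, and suppose for each t the decision x_t ∈ 𝒳 minimizes x ↦ Σ_{s=1}^{t-1} f̄_s(x) + R(x)/η over 𝒳 (FTRL iterates, with the minimizer for index T+1 also existing). Then the policy regret satisfies Σ_{t=1}^{T} f_t(h_t) − inf_{x ∈ 𝒳} Σ_{t=1}^{T} f̄_t(x) ≤ D/η + η T L̄² / α + η T L L̄ H_1 / α. -/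

import Mathlib

/-!
Split the regret into the FTRL regret on the surrogate losses `f̄ₜ` and the memory error
`∑ₜ (fₜ(hₜ) - f̄ₜ(xₜ))`. The FTRL objectives are `α/η`-strongly convex and consecutive ones differ
by the `L̄`-Lipschitz loss `f̄ₜ`, so comparing their quadratic growth around the two minimizers
shows `‖xₜ - xₜ₊₁‖ ≤ ηL̄/α`; with the be-the-leader inequality this gives `D/η + ηTL̄²/α`.
Since `hₜ = ∑ₖ Aᵏ B xₜ₋ₖ` and `‖xₜ₋ₖ - xₜ‖ ≤ k ηL̄/α`, the history is within `ηL̄H₁/α` of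
`∑ₖ Aᵏ B xₜ`, and `L`-Lipschitzness of `fₜ` turns this into the memory term.
-/

open Finset Filter Topology

section Convexity

variable {E : Type*} [NormedAddCommGroup E] [NormedSpace ℝ E] {s : Set E} {m : ℝ} {f g : E → ℝ}

lemma StrongConvexOn.add_convexOn (hf : StrongConvexOn s m f) (hg : ConvexOn ℝ s g) :
    StrongConvexOn s m (f + g) := by
  rw [StrongConvexOn, ← add_zero fun r : ℝ => m / 2 * r ^ 2]
  exact hf.add hg.uniformConvexOn_zero

lemma StrongConvexOn.div_const (hf : StrongConvexOn s m f) {c : ℝ} (hc : 0 < c) :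
    StrongConvexOn s (m / c) (fun x => f x / c) := by
  refine ⟨hf.1, fun a ha b hb p q hp hq hpq => ?_⟩
  have h := hf.2 ha hb hp hq hpq
  simp only [smul_eq_mul] at h ⊢
  rw [div_le_iff₀ hc]
  refine h.trans_eq ?_
  field_simp

lemma StrongConvexOn.add_sq_norm_sub_le_of_isMinOn (hf : StrongConvexOn s m f) {z y : E}
    (hz : z ∈ s) (hy : y ∈ s) (hmin : IsMinOn f s z) :
    f z + m / 2 * ‖z - y‖ ^ 2 ≤ f y := by
  -- Compare `f z` with the value of `f` at `a • y + (1 - a) • z`, then let `a → 0⁺`.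
  have key : ∀ a ∈ Set.Ioc (0 : ℝ) 1, (1 - a) * (m / 2 * ‖z - y‖ ^ 2) ≤ f y - f z := by
    rintro a ⟨ha0, ha1⟩
    have hconv := hf.2 hy hz ha0.le (sub_nonneg.2 ha1) (add_sub_cancel a 1)
    have hle := isMinOn_iff.1 hmin _ (hf.1 hy hz ha0.le (sub_nonneg.2 ha1) (add_sub_cancel a 1))
    rw [norm_sub_rev] at hconv
    simp only [smul_eq_mul] at hconv
    refine le_of_mul_le_mul_left ?_ ha0
    linarith
  have hlim : Tendsto (fun a : ℝ => (1 - a) * (m / 2 * ‖z - y‖ ^ 2)) (𝓝[>] 0)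
      (𝓝 (m / 2 * ‖z - y‖ ^ 2)) := by
    have : Continuous fun a : ℝ => (1 - a) * (m / 2 * ‖z - y‖ ^ 2) := by fun_prop
    simpa using (this.tendsto 0).mono_left nhdsWithin_le_nhds
  linarith [le_of_tendsto hlim (eventually_of_mem (Ioc_mem_nhdsGT zero_lt_one) key)]

lemma StrongConvexOn.norm_sub_le_of_isMinOn_add (hm : 0 < m) (hf : StrongConvexOn s m f)
    (hg : ConvexOn ℝ s g) {z₁ z₂ : E} (hz₁ : z₁ ∈ s) (hz₂ : z₂ ∈ s) (h₁ : IsMinOn f s z₁)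
    (h₂ : IsMinOn (f + g) s z₂) {G : ℝ} (hG : 0 ≤ G) (hlip : g z₁ - g z₂ ≤ G * ‖z₁ - z₂‖) :
    ‖z₁ - z₂‖ ≤ G / m := by
  have gap₁ := hf.add_sq_norm_sub_le_of_isMinOn hz₁ hz₂ h₁
  have gap₂ := (hf.add_convexOn hg).add_sq_norm_sub_le_of_isMinOn hz₂ hz₁ h₂
  rw [norm_sub_rev] at gap₂
  simp only [Pi.add_apply] at gap₂
  have hquad : m * ‖z₁ - z₂‖ ^ 2 ≤ G * ‖z₁ - z₂‖ := by linarith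
  rw [le_div_iff₀ hm]
  rcases (norm_nonneg (z₁ - z₂)).eq_or_lt with h0 | hpos
  · rw [← h0]; linarith
  · nlinarith

end Convexity

section FTRL

variable {α : Type*} (F : ℕ → α → ℝ) (r : α → ℝ)

/-- The objective minimized by the FTRL iterate of round `n + 1`. -/
def ftrlObjective (n : ℕ) (z : α) : ℝ :=
  ∑ s ∈ Icc 1 n, F s z + r z

lemma ftrlObjective_zero : ftrlObjective F r 0 = r := by
  funext z; simp [ftrlObjective]

lemma ftrlObjective_succ (n : ℕ) :
    ftrlObjective F r (n + 1) = ftrlObjective F r n + F (n + 1) := by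
  funext z
  simp only [ftrlObjective, Pi.add_apply, sum_Icc_succ_top (Nat.le_add_left 1 n)]
  ring

variable {F r} {X : Set α} {x : ℕ → α} {N : ℕ}

lemma sum_add_le_ftrlObjective_of_isMinOn (hmem : ∀ n ≤ N, x (n + 1) ∈ X)
    (hmin : ∀ n ≤ N, IsMinOn (ftrlObjective F r n) X (x (n + 1))) :
    ∀ n ≤ N, ∑ s ∈ Icc 1 n, F s (x (s + 1)) + r (x 1) ≤ ftrlObjective F r n (x (n + 1))
  | 0, _ => by simp [ftrlObjective]
  | n + 1, hn => by
    have ih := sum_add_le_ftrlObjective_of_isMinOn hmem hmin n (by omega)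
    have hle := isMinOn_iff.1 (hmin n (by omega)) _ (hmem (n + 1) hn)
    rw [sum_Icc_succ_top (by omega), ftrlObjective_succ, Pi.add_apply]
    linarith

lemma ftrl_regret_le_add_sum_sub_succ (hmem : ∀ n ≤ N, x (n + 1) ∈ X)
    (hmin : ∀ n ≤ N, IsMinOn (ftrlObjective F r n) X (x (n + 1))) {y : α} (hy : y ∈ X) :
    ∑ t ∈ Icc 1 N, F t (x t) - ∑ t ∈ Icc 1 N, F t y
      ≤ r y - r (x 1) + ∑ t ∈ Icc 1 N, (F t (x t) - F t (x (t + 1))) := by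
  have hleader := sum_add_le_ftrlObjective_of_isMinOn hmem hmin N le_rfl
  have hcomp := isMinOn_iff.1 (hmin N le_rfl) y hy
  simp only [ftrlObjective] at hleader hcomp
  rw [sum_sub_distrib]
  linarith

end FTRL

section StableFTRL

variable {E : Type*} [NormedAddCommGroup E] [NormedSpace ℝ E] {X : Set E} {F : ℕ → E → ℝ}
  {r : E → ℝ} {x : ℕ → E} {N : ℕ} {m G : ℝ}

lemma StrongConvexOn.ftrlObjective (hr : StrongConvexOn X m r)
    (hF : ∀ t ∈ Icc 1 N, ConvexOn ℝ X (F t)) :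
    ∀ n ≤ N, StrongConvexOn X m (ftrlObjective F r n)
  | 0, _ => by rwa [ftrlObjective_zero]
  | n + 1, hn => by
    rw [ftrlObjective_succ]
    exact (hr.ftrlObjective hF n (by omega)).add_convexOn (hF (n + 1) (by simp [hn]))

lemma ftrl_norm_sub_succ_le (hm : 0 < m) (hr : StrongConvexOn X m r)
    (hF : ∀ t ∈ Icc 1 N, ConvexOn ℝ X (F t)) (hG : 0 ≤ G)
    (hlip : ∀ t ∈ Icc 1 N, ∀ a ∈ X, ∀ b ∈ X, F t a - F t b ≤ G * ‖a - b‖)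
    (hmem : ∀ n ≤ N, x (n + 1) ∈ X)
    (hmin : ∀ n ≤ N, IsMinOn (ftrlObjective F r n) X (x (n + 1))) :
    ∀ t ∈ Icc 1 N, ‖x t - x (t + 1)‖ ≤ G / m := by
  intro t ht
  obtain ⟨n, rfl⟩ : ∃ n, t = n + 1 := ⟨t - 1, by grind⟩
  have hn : n + 1 ≤ N := (mem_Icc.1 ht).2
  refine (hr.ftrlObjective hF n (by omega)).norm_sub_le_of_isMinOn_add hm (hF _ ht)
    (hmem n (by omega)) (hmem (n + 1) hn) (hmin n (by omega)) ?_ hG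
    (hlip _ ht _ (hmem n (by omega)) _ (hmem (n + 1) hn))
  rw [← ftrlObjective_succ]
  exact hmin (n + 1) hn

lemma ftrl_regret_le (hm : 0 < m) (hr : StrongConvexOn X m r)
    (hF : ∀ t ∈ Icc 1 N, ConvexOn ℝ X (F t)) (hG : 0 ≤ G)
    (hlip : ∀ t ∈ Icc 1 N, ∀ a ∈ X, ∀ b ∈ X, F t a - F t b ≤ G * ‖a - b‖)
    (hmem : ∀ n ≤ N, x (n + 1) ∈ X)
    (hmin : ∀ n ≤ N, IsMinOn (ftrlObjective F r n) X (x (n + 1))) {y : E} (hy : y ∈ X) :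
    ∑ t ∈ Icc 1 N, F t (x t) - ∑ t ∈ Icc 1 N, F t y ≤ r y - r (x 1) + N * (G * (G / m)) := by
  refine (ftrl_regret_le_add_sum_sub_succ hmem hmin hy).trans (add_le_add_right ?_ _)
  have hstable := ftrl_norm_sub_succ_le hm hr hF hG hlip hmem hmin
  calc ∑ t ∈ Icc 1 N, (F t (x t) - F t (x (t + 1)))
      ≤ ∑ t ∈ Icc 1 N, G * (G / m) := by
        refine sum_le_sum fun t ht => ?_
        have hxt : x t ∈ X := by
          obtain ⟨n, rfl⟩ : ∃ n, t = n + 1 := ⟨t - 1, by grind⟩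
          exact hmem n (by grind)
        exact (hlip t ht _ hxt _ (hmem t (mem_Icc.1 ht).2)).trans
          (mul_le_mul_of_nonneg_left (hstable t ht) hG)
    _ = N * (G * (G / m)) := by simp

end StableFTRL

section Memory

lemma eq_sum_pow_apply_of_succ {R M : Type*} [Semiring R] [AddCommMonoid M] [Module R M]
    [TopologicalSpace M] {A : M →L[R] M} {u h : ℕ → M} (h0 : h 0 = 0)
    (hsucc : ∀ t, h (t + 1) = A (h t) + u (t + 1)) :
    ∀ t, h t = ∑ k ∈ range t, (A ^ k) (u (t - k))
  | 0 => by simp [h0]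
  | t + 1 => by
    rw [hsucc, eq_sum_pow_apply_of_succ h0 hsucc t, sum_range_succ' _ t]
    simp only [Nat.succ_sub_succ, pow_zero, one_apply_eq_self, Nat.sub_zero,
      map_sum, pow_succ', mul_apply_eq_comp]

lemma norm_sub_add_le_mul_of_norm_sub_succ_le {E : Type*} [SeminormedAddCommGroup E]
    {x : ℕ → E} {c : ℝ} (m : ℕ) :
    ∀ k, (∀ j < k, ‖x (m + j) - x (m + j + 1)‖ ≤ c) → ‖x m - x (m + k)‖ ≤ k * c
  | 0, _ => by simp
  | k + 1, h => by
    have ih := norm_sub_add_le_mul_of_norm_sub_succ_le m k fun j hj => h j (by omega)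
    calc ‖x m - x (m + (k + 1))‖ ≤ ‖x m - x (m + k)‖ + ‖x (m + k) - x (m + k + 1)‖ :=
          norm_sub_le_norm_sub_add_norm_sub _ _ _
      _ ≤ k * c + c := add_le_add ih (h k k.lt_succ_self)
      _ = (k + 1 : ℕ) * c := by push_cast; ring

variable {𝕜 W H : Type*} [NontriviallyNormedField 𝕜] [SeminormedAddCommGroup W]
  [NormedSpace 𝕜 W] [SeminormedAddCommGroup H] [NormedSpace 𝕜 H]

lemma norm_sum_pow_apply_sub_le (A : H →L[𝕜] H) {u : ℕ → H} {v : H} {c : ℝ} {t : ℕ}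
    (hu : ∀ k < t, ‖u k - v‖ ≤ k * c) :
    ‖∑ k ∈ range t, (A ^ k) (u k) - ∑ k ∈ range t, (A ^ k) v‖
      ≤ c * ∑ k ∈ range t, (k : ℝ) * ‖A ^ k‖ := by
  rw [← sum_sub_distrib, mul_sum]
  refine (norm_sum_le _ _).trans (sum_le_sum fun k hk => ?_)
  rw [← map_sub]
  calc ‖(A ^ k) (u k - v)‖ ≤ ‖A ^ k‖ * (k * c) :=
        (A ^ k).le_opNorm_of_le (hu k (mem_range.1 hk))
    _ = c * (k * ‖A ^ k‖) := by ring

lemma norm_history_sub_le {A : H →L[𝕜] H} {B : W →L[𝕜] H} (hB : ‖B‖ ≤ 1)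
    (hH1 : Summable fun k : ℕ => (k : ℝ) * ‖A ^ k‖) {x : ℕ → W} {h : ℕ → H} (hh0 : h 0 = 0)
    (hh : ∀ t, h (t + 1) = A (h t) + B (x (t + 1))) {c : ℝ} (hc : 0 ≤ c) {t : ℕ}
    (hstep : ∀ s, 1 ≤ s → s < t → ‖x s - x (s + 1)‖ ≤ c) :
    ‖h t - ∑ k ∈ range t, (A ^ k) (B (x t))‖ ≤ c * ∑' k : ℕ, (k : ℝ) * ‖A ^ k‖ := by
  rw [eq_sum_pow_apply_of_succ (u := fun s => B (x s)) hh0 hh t]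
  refine (norm_sum_pow_apply_sub_le A fun k hk => ?_).trans
    (mul_le_mul_of_nonneg_left (hH1.sum_le_tsum _ fun k _ => by positivity) hc)
  have hdrift : ‖x (t - k) - x (t - k + k)‖ ≤ k * c :=
    norm_sub_add_le_mul_of_norm_sub_succ_le (t - k) k fun j hj => hstep _ (by omega) (by omega)
  rw [Nat.sub_add_cancel hk.le] at hdrift
  rw [← map_sub]
  exact B.le_of_opNorm_le_of_le hB hdrift |>.trans_eq (one_mul _)

end Memory

theorem stmt_6_general
    {W : Type*} [NormedAddCommGroup W] [InnerProductSpace ℝ W]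
    {H : Type*} [NormedAddCommGroup H] [NormedSpace ℝ H]
    (X : Set W)
    (A : H →L[ℝ] H) (B : W →L[ℝ] H) (hB : ‖B‖ ≤ 1)
    (hH1 : Summable fun k : ℕ => (k : ℝ) * ‖A ^ k‖)
    (T : ℕ) (f : ℕ → H → ℝ) (L Lbar : ℝ) (hL : 0 ≤ L) (hLbar : 0 ≤ Lbar)
    (hf : ∀ t, 1 ≤ t → t ≤ T → ∀ a b : H, |f t a - f t b| ≤ L * ‖a - b‖)
    (hconv : ∀ t, 1 ≤ t → t ≤ T →
      ConvexOn ℝ X (fun x : W => f t (∑ k ∈ Finset.range t, (A ^ k) (B x))))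
    (hlipbar : ∀ t, 1 ≤ t → t ≤ T → ∀ a ∈ X, ∀ b ∈ X,
      |f t (∑ k ∈ Finset.range t, (A ^ k) (B a)) - f t (∑ k ∈ Finset.range t, (A ^ k) (B b))|
        ≤ Lbar * ‖a - b‖)
    (R : W → ℝ) (α : ℝ) (hα : 0 < α) (hR : StrongConvexOn X α R)
    (D : ℝ) (hD : ∀ a ∈ X, ∀ b ∈ X, |R a - R b| ≤ D)
    (η : ℝ) (hη : 0 < η)
    (x : ℕ → W)
    (hx : ∀ t, 1 ≤ t → t ≤ T + 1 → x t ∈ X ∧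
      ∀ y ∈ X,
        (∑ s ∈ Finset.Icc 1 (t - 1), f s (∑ k ∈ Finset.range s, (A ^ k) (B (x t))))
            + R (x t) / η
          ≤ (∑ s ∈ Finset.Icc 1 (t - 1), f s (∑ k ∈ Finset.range s, (A ^ k) (B y)))
            + R y / η)
    (h : ℕ → H) (hh0 : h 0 = 0) (hh : ∀ t : ℕ, h (t + 1) = A (h t) + B (x (t + 1))) :
    ∀ y ∈ X,
      (∑ t ∈ Finset.Icc 1 T, f t (h t))
          - (∑ t ∈ Finset.Icc 1 T, f t (∑ k ∈ Finset.range t, (A ^ k) (B y)))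
        ≤ D / η + η * T * Lbar ^ 2 / α
            + η * T * L * Lbar * (∑' k : ℕ, (k : ℝ) * ‖A ^ k‖) / α := by
  intro y hy
  set F : ℕ → W → ℝ := fun t z => f t (∑ k ∈ range t, (A ^ k) (B z))
  have hm : 0 < α / η := div_pos hα hη
  have hRη := hR.div_const hη
  have hmem : ∀ n ≤ T, x (n + 1) ∈ X := fun n hn => (hx (n + 1) (by omega) (by omega)).1
  have hmin : ∀ n ≤ T, IsMinOn (ftrlObjective F (fun z => R z / η) n) X (x (n + 1)) :=
    fun n hn => isMinOn_iff.2 fun z hz => by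
      have hftrl := (hx (n + 1) (by omega) (by omega)).2 z hz
      rwa [add_tsub_cancel_right] at hftrl
  have hFconv : ∀ t ∈ Icc 1 T, ConvexOn ℝ X (F t) :=
    fun t ht => hconv t (mem_Icc.1 ht).1 (mem_Icc.1 ht).2
  have hFlip : ∀ t ∈ Icc 1 T, ∀ a ∈ X, ∀ b ∈ X, F t a - F t b ≤ Lbar * ‖a - b‖ :=
    fun t ht a ha b hb =>
      (le_abs_self _).trans (hlipbar t (mem_Icc.1 ht).1 (mem_Icc.1 ht).2 a ha b hb)
  have hregret := ftrl_regret_le hm hRη hFconv hLbar hFlip hmem hmin hy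
  have hstable := ftrl_norm_sub_succ_le hm hRη hFconv hLbar hFlip hmem hmin
  have hmemory : ∀ t ∈ Icc 1 T,
      f t (h t) - F t (x t) ≤ L * (Lbar / (α / η) * ∑' k : ℕ, (k : ℝ) * ‖A ^ k‖) := by
    intro t ht
    refine (le_abs_self _).trans ((hf t (mem_Icc.1 ht).1 (mem_Icc.1 ht).2 _ _).trans
      (mul_le_mul_of_nonneg_left ?_ hL))
    exact norm_history_sub_le hB hH1 hh0 hh (by positivity)
      fun s hs1 hst => hstable s (mem_Icc.2 ⟨hs1, by grind⟩)
  have hRdiff : R y / η - R (x 1) / η ≤ D / η := by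
    rw [← sub_div]
    exact div_le_div_of_nonneg_right ((le_abs_self _).trans (hD _ hy _ (hmem 0 T.zero_le))) hη.le
  have hmemsum := sum_le_card_nsmul _ _ _ hmemory
  simp only [Nat.card_Icc, add_tsub_cancel_right, nsmul_eq_mul] at hmemsum
  rw [sum_sub_distrib] at hmemsum
  calc _ ≤ D / η + T * (Lbar * (Lbar / (α / η)))
        + T * (L * (Lbar / (α / η) * ∑' k : ℕ, (k : ℝ) * ‖A ^ k‖)) := by linarith
    _ = _ := by field_simp

/-- regret upper bound for FTRL with unbounded memory. Under the same setup as
Statement 5, with regularizer oscillation at most `D` on `𝒳` and FTRL minimizers existing for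
`t ∈ {1, …, T+1}`, the policy regret satisfies
`∑ₜ f_t(h_t) − ∑ₜ f̄_t(y) ≤ D/η + η T L̄²/α + η T L L̄ H₁/α` for every comparator `y ∈ 𝒳`. -/
theorem stmt_6
    {W : Type*} [NormedAddCommGroup W] [InnerProductSpace ℝ W] [CompleteSpace W]
    {H : Type*} [NormedAddCommGroup H] [NormedSpace ℝ H] [CompleteSpace H]
    (X : Set W) (hXne : X.Nonempty) (hXclosed : IsClosed X) (hXconvex : Convex ℝ X)
    (A : H →L[ℝ] H) (B : W →L[ℝ] H) (hB : ‖B‖ ≤ 1)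
    (hH1 : Summable fun k : ℕ => (k : ℝ) * ‖A ^ k‖)
    (T : ℕ) (f : ℕ → H → ℝ) (L Lbar : ℝ) (hL : 0 ≤ L) (hLbar : 0 ≤ Lbar)
    (hf : ∀ t, 1 ≤ t → t ≤ T → ∀ a b : H, |f t a - f t b| ≤ L * ‖a - b‖)
    (hconv : ∀ t, 1 ≤ t → t ≤ T →
      ConvexOn ℝ X (fun x : W => f t (∑ k ∈ Finset.range t, (A ^ k) (B x))))
    (hlipbar : ∀ t, 1 ≤ t → t ≤ T → ∀ a ∈ X, ∀ b ∈ X,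
      |f t (∑ k ∈ Finset.range t, (A ^ k) (B a)) - f t (∑ k ∈ Finset.range t, (A ^ k) (B b))|
        ≤ Lbar * ‖a - b‖)
    (R : W → ℝ) (α : ℝ) (hα : 0 < α) (hR : StrongConvexOn X α R)
    (D : ℝ) (hD : ∀ a ∈ X, ∀ b ∈ X, |R a - R b| ≤ D)
    (η : ℝ) (hη : 0 < η)
    (x : ℕ → W)
    (hx : ∀ t, 1 ≤ t → t ≤ T + 1 → x t ∈ X ∧
      ∀ y ∈ X,
        (∑ s ∈ Finset.Icc 1 (t - 1), f s (∑ k ∈ Finset.range s, (A ^ k) (B (x t))))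
            + R (x t) / η
          ≤ (∑ s ∈ Finset.Icc 1 (t - 1), f s (∑ k ∈ Finset.range s, (A ^ k) (B y)))
            + R y / η)
    (h : ℕ → H) (hh0 : h 0 = 0) (hh : ∀ t : ℕ, h (t + 1) = A (h t) + B (x (t + 1))) :
    ∀ y ∈ X,
      (∑ t ∈ Finset.Icc 1 T, f t (h t))
          - (∑ t ∈ Finset.Icc 1 T, f t (∑ k ∈ Finset.range t, (A ^ k) (B y)))
        ≤ D / η + η * T * Lbar ^ 2 / α
            + η * T * L * Lbar * (∑' k : ℕ, (k : ℝ) * ‖A ^ k‖) / α :=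
  stmt_6_general X A B hB hH1 T f L Lbar hL hLbar hf hconv hlipbar R α hα hR D hD η hη x hx h hh0 hh
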